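/- arXiv:2403.14848 — 12 statements merged into one kernel-verified Lean document; each statement's English description precedes it below -/
import Mathlib

section
/- Assume Δz_{i+1/2} ≠ 0. Then the sign property ⟦z⟧_{i+1/2}·Δz_{i+1/2} ≥ 0 holds if and only if w̃_0(1 - θ_{i+1}^-) + w_1(1 - θ_i^+) ≥ 0; moreover ⟦z⟧_{i+1/2} and Δz_{i+1/2} have the same strict sign (⟦z⟧_{i+1/2}·Δz_{i+1/2} > 0) if and only if w̃_0(1 - θ_{i+1}^-) + w_1(1 - θ_i^+) > 0. -/
/-!
Writing `w₁ = 1 - w₀` and `w̃₁ = 1 - w̃₀`, both reconstructions are the central average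
`(z_i + z_{i+1})/2` plus a weighted second difference, so the jump is
`(w̃₀ (Δz_{i+1/2} - Δz_{i+3/2}) + w₁ (Δz_{i+1/2} - Δz_{i-1/2})) / 2`.
Multiplying by `Δz_{i+1/2}` and factoring out `Δz_{i+1/2}² / 2 > 0` leaves
`w̃₀ (1 - θ⁻_{i+1}) + w₁ (1 - θ⁺_i)`, which therefore carries the sign.
-/

theorem weno3_jump_eq_of_add_eq_one (zm z0 z1 z2 w₀ w₁ v₀ v₁ : ℝ)
    (hw : w₀ + w₁ = 1) (hv : v₀ + v₁ = 1) :
    (v₀ * (3 * z1 - z2) + v₁ * (z0 + z1)) / 2 - (w₀ * (z0 + z1) + w₁ * (3 * z0 - zm)) / 2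
      = (v₀ * ((z1 - z0) - (z2 - z1)) + w₁ * ((z1 - z0) - (z0 - zm))) / 2 := by
  obtain rfl : w₀ = 1 - w₁ := by linarith
  obtain rfl : v₁ = 1 - v₀ := by linarith
  ring

theorem div_two_mul_eq_sq_mul_one_sub_ratio {d e f v w : ℝ} (hd : d ≠ 0) :
    (v * (d - e) + w * (d - f)) / 2 * d = d ^ 2 / 2 * (v * (1 - e / d) + w * (1 - f / d)) := by
  field_simp

/-- Assuming `Δz_{i+1/2} ≠ 0`, the sign property
`⟦z⟧_{i+1/2}·Δz_{i+1/2} ≥ 0` holds iff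
`w̃₀(1 - θ⁻_{i+1}) + w₁(1 - θ⁺_i) ≥ 0`, and the strict version
`⟦z⟧_{i+1/2}·Δz_{i+1/2} > 0` holds iff `w̃₀(1 - θ⁻_{i+1}) + w₁(1 - θ⁺_i) > 0`. -/
theorem weno_sign_property_iff (zm z0 z1 z2 C1 C2 : ℝ) (hΔ : z1 - z0 ≠ 0) :
    ((((1/4 - 2*C2)*(3*z1 - z2) + (3/4 + 2*C2)*(z0 + z1))/2
        - ((3/4 + 2*C1)*(z0 + z1) + (1/4 - 2*C1)*(3*z0 - zm))/2) * (z1 - z0) ≥ 0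
      ↔ (1/4 - 2*C2)*(1 - (z2 - z1)/(z1 - z0))
          + (1/4 - 2*C1)*(1 - (z0 - zm)/(z1 - z0)) ≥ 0) ∧
    ((((1/4 - 2*C2)*(3*z1 - z2) + (3/4 + 2*C2)*(z0 + z1))/2
        - ((3/4 + 2*C1)*(z0 + z1) + (1/4 - 2*C1)*(3*z0 - zm))/2) * (z1 - z0) > 0
      ↔ (1/4 - 2*C2)*(1 - (z2 - z1)/(z1 - z0))
          + (1/4 - 2*C1)*(1 - (z0 - zm)/(z1 - z0)) > 0) := by
  rw [weno3_jump_eq_of_add_eq_one zm z0 z1 z2 _ _ _ _ (by ring) (by ring),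
    div_two_mul_eq_sq_mul_one_sub_ratio hΔ]
  have hpos : 0 < (z1 - z0) ^ 2 / 2 := by positivity
  exact ⟨mul_nonneg_iff_of_pos_left hpos, mul_pos_iff_of_pos_left hpos⟩
end

section
/- (Stability bound for DSP-WENO.) If -3/8 ≤ C_1 ≤ 1/8 and -3/8 ≤ C_2 ≤ 1/8 (consistency of the weights), then the reconstructed jump satisfies |⟦z⟧_{i+1/2}| ≤ (1/2)|Δz_{i-1/2}| + |Δz_{i+1/2}| + (1/2)|Δz_{i+3/2}|. -/
/-!
In terms of the undivided jumps the reconstructed jump is the linear combination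
`(C₁ - 1/8) Δz_{i-1/2} + (1/4 - C₁ - C₂) Δz_{i+1/2} + (C₂ - 1/8) Δz_{i+3/2}`.
The consistency constraints put the outer coefficients in `[-1/2, 0]` and the middle one
in `[0, 1]`, so the triangle inequality gives the bound.
-/

theorem weno3_jump_eq_undivided (zm z0 z1 z2 C1 C2 : ℝ) :
    ((1/4 - 2*C2)*(3*z1 - z2) + (3/4 + 2*C2)*(z0 + z1))/2
      - ((3/4 + 2*C1)*(z0 + z1) + (1/4 - 2*C1)*(3*z0 - zm))/2
    = (C1 - 1/8) * (z0 - zm) + (1/4 - C1 - C2) * (z1 - z0) + (C2 - 1/8) * (z2 - z1) := by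
  ring

lemma abs_mul_le_of_abs_le {α : Type*} [Ring α] [LinearOrder α] [IsOrderedRing α]
    {a b : α} (x : α) (h : |a| ≤ b) : |a * x| ≤ b * |x| := by
  rw [abs_mul]
  exact mul_le_mul_of_nonneg_right h (abs_nonneg x)

/-- Stability bound for DSP-WENO: if `-3/8 ≤ C₁ ≤ 1/8` and
`-3/8 ≤ C₂ ≤ 1/8`, then the reconstructed jump satisfies
`|⟦z⟧_{i+1/2}| ≤ (1/2)|Δz_{i-1/2}| + |Δz_{i+1/2}| + (1/2)|Δz_{i+3/2}|`. -/
theorem dsp_weno_stability_bound (zm z0 z1 z2 C1 C2 : ℝ)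
    (hC1l : -(3/8) ≤ C1) (hC1u : C1 ≤ 1/8)
    (hC2l : -(3/8) ≤ C2) (hC2u : C2 ≤ 1/8) :
    |((1/4 - 2*C2)*(3*z1 - z2) + (3/4 + 2*C2)*(z0 + z1))/2
      - ((3/4 + 2*C1)*(z0 + z1) + (1/4 - 2*C1)*(3*z0 - zm))/2|
    ≤ (1/2)*|z0 - zm| + |z1 - z0| + (1/2)*|z2 - z1| := by
  have hleft : |C1 - 1/8| ≤ 1/2 := abs_le.2 ⟨by linarith, by linarith⟩
  have hmid : |1/4 - C1 - C2| ≤ 1 := abs_le.2 ⟨by linarith, by linarith⟩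
  have hright : |C2 - 1/8| ≤ 1/2 := abs_le.2 ⟨by linarith, by linarith⟩
  rw [weno3_jump_eq_undivided]
  refine (abs_add_three _ _ _).trans (add_le_add (add_le_add ?_ ?_) ?_)
  · exact abs_mul_le_of_abs_le _ hleft
  · simpa using abs_mul_le_of_abs_le (z1 - z0) hmid
  · exact abs_mul_le_of_abs_le _ hright
end

section
/- (Case 1 of the SP-WENO case analysis.) Assume Δz_{i+1/2} ≠ 0 and θ_i^+ > 1 and θ_{i+1}^- > 1, and that the weights are consistent, i.e. -3/8 ≤ C_1, C_2 ≤ 1/8. Then the sign-property constraint w̃_0(1 - θ_{i+1}^-) + w_1(1 - θ_i^+) ≥ 0 holds if and only if C_1 = C_2 = 1/8 (equivalently w_1 = w̃_0 = 0), and in that case the reconstructed jump vanishes: ⟦z⟧_{i+1/2} = 0. -/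
/-! Since both jump ratios exceed `1`, both factors `1 - θ` are negative, while consistency makes
both weights `w₁ = 1/4 - 2 C₁` and `w̃₀ = 1/4 - 2 C₂` nonnegative. A sum of two nonpositive terms
is nonnegative only if each term vanishes, which forces `w₁ = w̃₀ = 0`. With these weights both
one-sided reconstructions reduce to the centred average `(z_i + z_{i+1}) / 2`, so the jump is zero. -/

theorem mul_add_mul_nonneg_iff_of_nonneg_of_neg {α : Type*} [CommRing α] [LinearOrder α]
    [IsStrictOrderedRing α] {a b x y : α} (ha : 0 ≤ a) (hb : 0 ≤ b) (hx : x < 0) (hy : y < 0) :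
    0 ≤ a * x + b * y ↔ a = 0 ∧ b = 0 := by
  constructor
  · intro h
    have hax : a * x ≤ 0 := mul_nonpos_of_nonneg_of_nonpos ha hx.le
    have hby : b * y ≤ 0 := mul_nonpos_of_nonneg_of_nonpos hb hy.le
    have hax0 : a * x = 0 := le_antisymm hax (by linarith)
    have hby0 : b * y = 0 := le_antisymm hby (by linarith)
    exact ⟨(mul_eq_zero.mp hax0).resolve_right hx.ne, (mul_eq_zero.mp hby0).resolve_right hy.ne⟩
  · rintro ⟨rfl, rfl⟩
    simp

theorem sp_weno_case1_general (zm z0 z1 z2 C1 C2 : ℝ)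
    (hθp : (z0 - zm)/(z1 - z0) > 1) (hθm : (z2 - z1)/(z1 - z0) > 1)
    (hC1u : C1 ≤ 1/8)
    (hC2u : C2 ≤ 1/8) :
    ((1/4 - 2*C2)*(1 - (z2 - z1)/(z1 - z0))
        + (1/4 - 2*C1)*(1 - (z0 - zm)/(z1 - z0)) ≥ 0
      ↔ (C1 = 1/8 ∧ C2 = 1/8)) ∧
    ((C1 = 1/8 ∧ C2 = 1/8) →
      ((1/4 - 2*C2)*(3*z1 - z2) + (3/4 + 2*C2)*(z0 + z1))/2
        - ((3/4 + 2*C1)*(z0 + z1) + (1/4 - 2*C1)*(3*z0 - zm))/2 = 0) := by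
  refine ⟨?_, ?_⟩
  · rw [ge_iff_le, mul_add_mul_nonneg_iff_of_nonneg_of_neg (by linarith) (by linarith)
      (by linarith) (by linarith)]
    constructor <;> rintro ⟨h1, h2⟩ <;> constructor <;> linarith
  · rintro ⟨rfl, rfl⟩
    ring

/-- Case 1 of the SP-WENO case analysis: if `Δz_{i+1/2} ≠ 0`,
`θ⁺_i > 1`, `θ⁻_{i+1} > 1`, and the weights are consistent
(`-3/8 ≤ C₁, C₂ ≤ 1/8`), then the sign-property constraint
`w̃₀(1 - θ⁻_{i+1}) + w₁(1 - θ⁺_i) ≥ 0` holds iff `C₁ = C₂ = 1/8`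
(equivalently `w₁ = w̃₀ = 0`), and in that case the reconstructed jump vanishes. -/
theorem sp_weno_case1 (zm z0 z1 z2 C1 C2 : ℝ) (hΔ : z1 - z0 ≠ 0)
    (hθp : (z0 - zm)/(z1 - z0) > 1) (hθm : (z2 - z1)/(z1 - z0) > 1)
    (hC1l : -(3/8) ≤ C1) (hC1u : C1 ≤ 1/8)
    (hC2l : -(3/8) ≤ C2) (hC2u : C2 ≤ 1/8) :
    ((1/4 - 2*C2)*(1 - (z2 - z1)/(z1 - z0))
        + (1/4 - 2*C1)*(1 - (z0 - zm)/(z1 - z0)) ≥ 0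
      ↔ (C1 = 1/8 ∧ C2 = 1/8)) ∧
    ((C1 = 1/8 ∧ C2 = 1/8) →
      ((1/4 - 2*C2)*(3*z1 - z2) + (3/4 + 2*C2)*(z0 + z1))/2
        - ((3/4 + 2*C1)*(z0 + z1) + (1/4 - 2*C1)*(3*z0 - zm))/2 = 0) :=
  sp_weno_case1_general zm z0 z1 z2 C1 C2 hθp hθm hC1u hC2u
end

section
/- (Cases 4b, 5b, 6 of the SP-WENO case analysis.) Assume Δz_{i+1/2} ≠ 0, θ_i^+ ≤ 1, and θ_{i+1}^- ≤ 1. Then for every choice of consistent weights (i.e. -3/8 ≤ C_1, C_2 ≤ 1/8), the sign-property constraint w̃_0(1 - θ_{i+1}^-) + w_1(1 - θ_i^+) ≥ 0 holds automatically, and hence ⟦z⟧_{i+1/2}·Δz_{i+1/2} ≥ 0. -/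
/-! The reconstructed jump satisfies the exact identity
`⟦z⟧ Δz = (w̃₀(1 - θ⁻) + w₁(1 - θ⁺)) Δz² / 2`, so its sign is that of the sign-property
constraint. The constraint is a sum of two products of nonnegative factors: `w̃₀, w₁ ≥ 0`
because `C₁, C₂ ≤ 1/8`, and `1 - θ ≥ 0`. -/

section
variable {K : Type*} [Field K]

theorem mul_sub_eq_sq_mul_one_sub_div (Δ a : K) : Δ * (Δ - a) = Δ ^ 2 * (1 - a / Δ) := by
  rcases eq_or_ne Δ 0 with rfl | hΔ
  · simp
  · field_simp

theorem weno3_jump_mul_eq (zm z0 z1 z2 C1 C2 : K) :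
    (((1/4 - 2*C2)*(3*z1 - z2) + (3/4 + 2*C2)*(z0 + z1))/2
        - ((3/4 + 2*C1)*(z0 + z1) + (1/4 - 2*C1)*(3*z0 - zm))/2) * (z1 - z0)
      = ((1/4 - 2*C2)*(1 - (z2 - z1)/(z1 - z0))
        + (1/4 - 2*C1)*(1 - (z0 - zm)/(z1 - z0))) * ((z1 - z0)^2/2) := by
  calc _ = ((1/4 - 2*C2)*((z1 - z0)*((z1 - z0) - (z2 - z1)))
        + (1/4 - 2*C1)*((z1 - z0)*((z1 - z0) - (z0 - zm))))/2 := by ring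
    _ = _ := by rw [mul_sub_eq_sq_mul_one_sub_div, mul_sub_eq_sq_mul_one_sub_div]; ring

end

theorem weno3_sign_constraint_nonneg {R : Type*} [Ring R] [PartialOrder R] [IsOrderedRing R]
    {w₀ w₁ θm θp : R} (hw₀ : 0 ≤ w₀) (hw₁ : 0 ≤ w₁) (hθm : θm ≤ 1) (hθp : θp ≤ 1) :
    0 ≤ w₀ * (1 - θm) + w₁ * (1 - θp) :=
  add_nonneg (mul_nonneg hw₀ (sub_nonneg.2 hθm)) (mul_nonneg hw₁ (sub_nonneg.2 hθp))

theorem sp_weno_cases_4b_5b_6_general (zm z0 z1 z2 C1 C2 : ℝ)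
    (hθp : (z0 - zm)/(z1 - z0) ≤ 1) (hθm : (z2 - z1)/(z1 - z0) ≤ 1)
    (hC1u : C1 ≤ 1/8)
    (hC2u : C2 ≤ 1/8) :
    (1/4 - 2*C2)*(1 - (z2 - z1)/(z1 - z0))
        + (1/4 - 2*C1)*(1 - (z0 - zm)/(z1 - z0)) ≥ 0 ∧
    (((1/4 - 2*C2)*(3*z1 - z2) + (3/4 + 2*C2)*(z0 + z1))/2
        - ((3/4 + 2*C1)*(z0 + z1) + (1/4 - 2*C1)*(3*z0 - zm))/2) * (z1 - z0) ≥ 0 := by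
  have hconstraint := weno3_sign_constraint_nonneg (by linarith : (0 : ℝ) ≤ 1/4 - 2*C2)
    (by linarith : (0 : ℝ) ≤ 1/4 - 2*C1) hθm hθp
  refine ⟨hconstraint, ?_⟩
  rw [weno3_jump_mul_eq]
  positivity

/-- Cases 4b, 5b, 6 of the SP-WENO case analysis: if
`Δz_{i+1/2} ≠ 0`, `θ⁺_i ≤ 1` and `θ⁻_{i+1} ≤ 1`, then for every choice of
consistent weights (`-3/8 ≤ C₁, C₂ ≤ 1/8`) the sign-property constraint
`w̃₀(1 - θ⁻_{i+1}) + w₁(1 - θ⁺_i) ≥ 0` holds automatically, and hence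
`⟦z⟧_{i+1/2}·Δz_{i+1/2} ≥ 0`. -/
theorem sp_weno_cases_4b_5b_6 (zm z0 z1 z2 C1 C2 : ℝ) (hΔ : z1 - z0 ≠ 0)
    (hθp : (z0 - zm)/(z1 - z0) ≤ 1) (hθm : (z2 - z1)/(z1 - z0) ≤ 1)
    (hC1l : -(3/8) ≤ C1) (hC1u : C1 ≤ 1/8)
    (hC2l : -(3/8) ≤ C2) (hC2u : C2 ≤ 1/8) :
    (1/4 - 2*C2)*(1 - (z2 - z1)/(z1 - z0))
        + (1/4 - 2*C1)*(1 - (z0 - zm)/(z1 - z0)) ≥ 0 ∧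
    (((1/4 - 2*C2)*(3*z1 - z2) + (3/4 + 2*C2)*(z0 + z1))/2
        - ((3/4 + 2*C1)*(z0 + z1) + (1/4 - 2*C1)*(3*z0 - zm))/2) * (z1 - z0) ≥ 0 :=
  sp_weno_cases_4b_5b_6_general zm z0 z1 z2 C1 C2 hθp hθm hC1u hC2u
end

section
/- (Case 4a of the SP-WENO case analysis.) Assume Δz_{i+1/2} ≠ 0, θ_{i+1}^- = 1, and θ_i^+ > 1, and that the weights are consistent (-3/8 ≤ C_1, C_2 ≤ 1/8). Then the sign-property constraint w̃_0(1 - θ_{i+1}^-) + w_1(1 - θ_i^+) ≥ 0 holds if and only if C_1 = 1/8 (equivalently w_1 = 0); in particular C_2 is unconstrained beyond consistency. -/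
theorem mul_nonneg_iff_eq_zero_of_nonneg_of_neg {R : Type*} [Ring R] [LinearOrder R]
    [IsStrictOrderedRing R] {w t : R} (hw : 0 ≤ w) (ht : t < 0) : 0 ≤ w * t ↔ w = 0 := by
  refine ⟨fun h => ?_, fun h => by simp [h]⟩
  by_contra hne
  exact (mul_neg_of_pos_of_neg (lt_of_le_of_ne hw (Ne.symm hne)) ht).not_ge h

theorem sp_weno_case4a_general (zm z0 z1 z2 C1 C2 : ℝ)
    (hθm : (z2 - z1)/(z1 - z0) = 1) (hθp : (z0 - zm)/(z1 - z0) > 1)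
    (hC1u : C1 ≤ 1/8) :
    (1/4 - 2*C2)*(1 - (z2 - z1)/(z1 - z0))
        + (1/4 - 2*C1)*(1 - (z0 - zm)/(z1 - z0)) ≥ 0 ↔ C1 = 1/8 := by
  have hw₁ : 0 ≤ 1/4 - 2*C1 := by linarith
  have hfactor : 1 - (z0 - zm)/(z1 - z0) < 0 := by linarith
  rw [hθm, sub_self, mul_zero, zero_add, ge_iff_le,
    mul_nonneg_iff_eq_zero_of_nonneg_of_neg hw₁ hfactor]
  constructor <;> intro h <;> linarith

/-- Case 4a of the SP-WENO case analysis: if `Δz_{i+1/2} ≠ 0`,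
`θ⁻_{i+1} = 1`, `θ⁺_i > 1` and the weights are consistent
(`-3/8 ≤ C₁, C₂ ≤ 1/8`), then the sign-property constraint
`w̃₀(1 - θ⁻_{i+1}) + w₁(1 - θ⁺_i) ≥ 0` holds iff `C₁ = 1/8`
(equivalently `w₁ = 0`); `C₂` is unconstrained beyond consistency. -/
theorem sp_weno_case4a (zm z0 z1 z2 C1 C2 : ℝ) (hΔ : z1 - z0 ≠ 0)
    (hθm : (z2 - z1)/(z1 - z0) = 1) (hθp : (z0 - zm)/(z1 - z0) > 1)
    (hC1l : -(3/8) ≤ C1) (hC1u : C1 ≤ 1/8)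
    (hC2l : -(3/8) ≤ C2) (hC2u : C2 ≤ 1/8) :
    (1/4 - 2*C2)*(1 - (z2 - z1)/(z1 - z0))
        + (1/4 - 2*C1)*(1 - (z0 - zm)/(z1 - z0)) ≥ 0 ↔ C1 = 1/8 :=
  sp_weno_case4a_general zm z0 z1 z2 C1 C2 hθm hθp hC1u
end

section
/- Assume Δz_{i+1/2} ≠ 0, set a = 1 - θ_i^+ and b = 1 - θ_{i+1}^-, and assume a + b > 0. Then the identity w̃_0(1 - θ_{i+1}^-) + w_1(1 - θ_i^+) = (a + b)(1 - ℒ)/4 holds, and consequently the sign-property constraint w̃_0(1 - θ_{i+1}^-) + w_1(1 - θ_i^+) ≥ 0 holds if and only if ℒ ≤ 1. (This covers Cases 2a and 3b of the SP-WENO case analysis.) -/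
theorem weno_weights_combination_eq (C1 C2 a b : ℝ) (hab : a + b ≠ 0) :
    (1/4 - 2*C2)*b + (1/4 - 2*C1)*a = (a + b)*(1 - 8*(C1*a + C2*b)/(a + b))/4 := by
  field_simp
  ring

theorem mul_one_sub_div_four_nonneg_iff {s L : ℝ} (hs : 0 < s) :
    0 ≤ s*(1 - L)/4 ↔ L ≤ 1 := by
  rw [le_div_iff₀ four_pos, zero_mul, mul_nonneg_iff_of_pos_left hs, sub_nonneg]

theorem sp_weno_L_pos_general (zm z0 z1 z2 C1 C2 a b L : ℝ)
    (ha : a = 1 - (z0 - zm)/(z1 - z0)) (hb : b = 1 - (z2 - z1)/(z1 - z0))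
    (hab : a + b > 0) (hL : L = 8*(C1*a + C2*b)/(a + b)) :
    (1/4 - 2*C2)*(1 - (z2 - z1)/(z1 - z0))
        + (1/4 - 2*C1)*(1 - (z0 - zm)/(z1 - z0)) = (a + b)*(1 - L)/4 ∧
    ((1/4 - 2*C2)*(1 - (z2 - z1)/(z1 - z0))
        + (1/4 - 2*C1)*(1 - (z0 - zm)/(z1 - z0)) ≥ 0 ↔ L ≤ 1) := by
  have constraint_eq : (1/4 - 2*C2)*(1 - (z2 - z1)/(z1 - z0))
      + (1/4 - 2*C1)*(1 - (z0 - zm)/(z1 - z0)) = (a + b)*(1 - L)/4 := by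
    rw [← ha, ← hb, hL]
    exact weno_weights_combination_eq C1 C2 a b hab.ne'
  rw [constraint_eq, ge_iff_le]
  exact ⟨rfl, mul_one_sub_div_four_nonneg_iff hab⟩

/-- Cases 2a and 3b of the SP-WENO case analysis: with
`a = 1 - θ⁺_i`, `b = 1 - θ⁻_{i+1}`, `a + b > 0`, and
`ℒ = 8(C₁a + C₂b)/(a + b)`, the identity
`w̃₀(1 - θ⁻_{i+1}) + w₁(1 - θ⁺_i) = (a + b)(1 - ℒ)/4` holds, and hence the
sign-property constraint holds iff `ℒ ≤ 1`. -/
theorem sp_weno_L_pos (zm z0 z1 z2 C1 C2 a b L : ℝ) (hΔ : z1 - z0 ≠ 0)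
    (ha : a = 1 - (z0 - zm)/(z1 - z0)) (hb : b = 1 - (z2 - z1)/(z1 - z0))
    (hab : a + b > 0) (hL : L = 8*(C1*a + C2*b)/(a + b)) :
    (1/4 - 2*C2)*(1 - (z2 - z1)/(z1 - z0))
        + (1/4 - 2*C1)*(1 - (z0 - zm)/(z1 - z0)) = (a + b)*(1 - L)/4 ∧
    ((1/4 - 2*C2)*(1 - (z2 - z1)/(z1 - z0))
        + (1/4 - 2*C1)*(1 - (z0 - zm)/(z1 - z0)) ≥ 0 ↔ L ≤ 1) :=
  sp_weno_L_pos_general zm z0 z1 z2 C1 C2 a b L ha hb hab hL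
end

section
/- Assume Δz_{i+1/2} ≠ 0, set a = 1 - θ_i^+ and b = 1 - θ_{i+1}^-, and assume a + b < 0. Then the identity w̃_0(1 - θ_{i+1}^-) + w_1(1 - θ_i^+) = (a + b)(1 - ℒ)/4 holds, and consequently the sign-property constraint w̃_0(1 - θ_{i+1}^-) + w_1(1 - θ_i^+) ≥ 0 holds if and only if ℒ ≥ 1. (This covers Cases 2b and 3a of the SP-WENO case analysis.) -/
/-! In terms of `a = 1 - θ⁺_i` and `b = 1 - θ⁻_{i+1}`, the constraint reads
`(1/4 - 2C₂) b + (1/4 - 2C₁) a = (a + b)/4 - 2(C₁a + C₂b)`, and `ℒ` is by definition the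
ratio `8(C₁a + C₂b)/(a + b)`, which gives the identity. Since `a + b < 0`, the sign of
`(a + b)(1 - ℒ)/4` is the opposite of the sign of `1 - ℒ`. -/

theorem weighted_jump_sum_eq (C₁ C₂ a b : ℝ) (hab : a + b ≠ 0) :
    (1/4 - 2*C₂)*b + (1/4 - 2*C₁)*a = (a + b)*(1 - 8*(C₁*a + C₂*b)/(a + b))/4 := by
  field_simp
  ring

theorem mul_one_sub_div_four_nonneg_iff_of_neg {s L : ℝ} (hs : s < 0) :
    0 ≤ s*(1 - L)/4 ↔ 1 ≤ L := by
  constructor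
  · intro h
    by_contra! hL
    have : s*(1 - L) < 0 := mul_neg_of_neg_of_pos hs (by linarith)
    linarith
  · intro hL
    have : 0 ≤ s*(1 - L) := mul_nonneg_of_nonpos_of_nonpos hs.le (by linarith)
    positivity

theorem sp_weno_L_neg_general (zm z0 z1 z2 C1 C2 a b L : ℝ)
    (ha : a = 1 - (z0 - zm)/(z1 - z0)) (hb : b = 1 - (z2 - z1)/(z1 - z0))
    (hab : a + b < 0) (hL : L = 8*(C1*a + C2*b)/(a + b)) :
    (1/4 - 2*C2)*(1 - (z2 - z1)/(z1 - z0))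
        + (1/4 - 2*C1)*(1 - (z0 - zm)/(z1 - z0)) = (a + b)*(1 - L)/4 ∧
    ((1/4 - 2*C2)*(1 - (z2 - z1)/(z1 - z0))
        + (1/4 - 2*C1)*(1 - (z0 - zm)/(z1 - z0)) ≥ 0 ↔ L ≥ 1) := by
  rw [← ha, ← hb]
  have key : (1/4 - 2*C2)*b + (1/4 - 2*C1)*a = (a + b)*(1 - L)/4 :=
    hL ▸ weighted_jump_sum_eq C1 C2 a b hab.ne
  exact ⟨key, key ▸ mul_one_sub_div_four_nonneg_iff_of_neg hab⟩

/-- Cases 2b and 3a of the SP-WENO case analysis: with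
`a = 1 - θ⁺_i`, `b = 1 - θ⁻_{i+1}`, `a + b < 0`, and
`ℒ = 8(C₁a + C₂b)/(a + b)`, the identity
`w̃₀(1 - θ⁻_{i+1}) + w₁(1 - θ⁺_i) = (a + b)(1 - ℒ)/4` holds, and hence the
sign-property constraint holds iff `ℒ ≥ 1`. -/
theorem sp_weno_L_neg (zm z0 z1 z2 C1 C2 a b L : ℝ) (hΔ : z1 - z0 ≠ 0)
    (ha : a = 1 - (z0 - zm)/(z1 - z0)) (hb : b = 1 - (z2 - z1)/(z1 - z0))
    (hab : a + b < 0) (hL : L = 8*(C1*a + C2*b)/(a + b)) :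
    (1/4 - 2*C2)*(1 - (z2 - z1)/(z1 - z0))
        + (1/4 - 2*C1)*(1 - (z0 - zm)/(z1 - z0)) = (a + b)*(1 - L)/4 ∧
    ((1/4 - 2*C2)*(1 - (z2 - z1)/(z1 - z0))
        + (1/4 - 2*C1)*(1 - (z0 - zm)/(z1 - z0)) ≥ 0 ↔ L ≥ 1) :=
  sp_weno_L_neg_general zm z0 z1 z2 C1 C2 a b L ha hb hab hL
end

section
/- (Characterization of the zero-diffusion line.) Assume Δz_{i+1/2} ≠ 0, set a = 1 - θ_i^+ and b = 1 - θ_{i+1}^-, and assume a + b ≠ 0. Then the reconstructed jump vanishes, ⟦z⟧_{i+1/2} = 0, if and only if ℒ = 1, i.e. if and only if (C_1, C_2) lies on the line 8(C_1·a + C_2·b) = a + b. -/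
/-!
Writing `d = Δz_{i+1/2}`, the reconstructed jump is the second-difference combination
`((1 - 8C₁)(d - Δz_{i-1/2}) + (1 - 8C₂)(d - Δz_{i+3/2})) / 8`, and `d a = d - Δz_{i-1/2}`,
`d b = d - Δz_{i+3/2}`. Hence `⟦z⟧ = d/8 · ((a + b) - 8(C₁a + C₂b))`, which vanishes exactly
on the line since `d ≠ 0`.
-/

/-- `⟦z⟧_{i+1/2}` for the stencil `(zm, z0, z1, z2) = (z_{i-1}, z_i, z_{i+1}, z_{i+2})`. -/
noncomputable def reconJump (zm z0 z1 z2 C1 C2 : ℝ) : ℝ :=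
  ((1/4 - 2*C2)*(3*z1 - z2) + (3/4 + 2*C2)*(z0 + z1))/2
    - ((3/4 + 2*C1)*(z0 + z1) + (1/4 - 2*C1)*(3*z0 - zm))/2

theorem reconJump_eq (zm z0 z1 z2 C1 C2 : ℝ) :
    reconJump zm z0 z1 z2 C1 C2 =
      ((1 - 8*C1)*((z1 - z0) - (z0 - zm)) + (1 - 8*C2)*((z1 - z0) - (z2 - z1)))/8 := by
  unfold reconJump
  ring

theorem reconJump_eq_mul {zm z0 z1 z2 C1 C2 a b : ℝ} (hΔ : z1 - z0 ≠ 0)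
    (ha : a = 1 - (z0 - zm)/(z1 - z0)) (hb : b = 1 - (z2 - z1)/(z1 - z0)) :
    reconJump zm z0 z1 z2 C1 C2 = (z1 - z0)/8 * (a + b - 8*(C1*a + C2*b)) := by
  subst ha hb
  rw [reconJump_eq]
  field_simp
  ring

theorem reconJump_eq_zero_iff {zm z0 z1 z2 C1 C2 a b : ℝ} (hΔ : z1 - z0 ≠ 0)
    (ha : a = 1 - (z0 - zm)/(z1 - z0)) (hb : b = 1 - (z2 - z1)/(z1 - z0)) :
    reconJump zm z0 z1 z2 C1 C2 = 0 ↔ 8*(C1*a + C2*b) = a + b := by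
  rw [reconJump_eq_mul hΔ ha hb, mul_eq_zero, sub_eq_zero, eq_comm (a := a + b)]
  simp [hΔ]

/-- Characterization of the zero-diffusion line: with
`a = 1 - θ⁺_i`, `b = 1 - θ⁻_{i+1}`, `a + b ≠ 0`, and
`ℒ = 8(C₁a + C₂b)/(a + b)`, the reconstructed jump vanishes iff `ℒ = 1`,
i.e. iff `(C₁, C₂)` lies on the line `8(C₁a + C₂b) = a + b`. -/
theorem sp_weno_zero_jump_iff (zm z0 z1 z2 C1 C2 a b L : ℝ) (hΔ : z1 - z0 ≠ 0)
    (ha : a = 1 - (z0 - zm)/(z1 - z0)) (hb : b = 1 - (z2 - z1)/(z1 - z0))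
    (hab : a + b ≠ 0) (hL : L = 8*(C1*a + C2*b)/(a + b)) :
    (((1/4 - 2*C2)*(3*z1 - z2) + (3/4 + 2*C2)*(z0 + z1))/2
        - ((3/4 + 2*C1)*(z0 + z1) + (1/4 - 2*C1)*(3*z0 - zm))/2 = 0 ↔ L = 1) ∧
    (((1/4 - 2*C2)*(3*z1 - z2) + (3/4 + 2*C2)*(z0 + z1))/2
        - ((3/4 + 2*C1)*(z0 + z1) + (1/4 - 2*C1)*(3*z0 - zm))/2 = 0
      ↔ 8*(C1*a + C2*b) = a + b) := by
  have hline : reconJump zm z0 z1 z2 C1 C2 = 0 ↔ 8*(C1*a + C2*b) = a + b :=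
    reconJump_eq_zero_iff hΔ ha hb
  refine ⟨hline.trans ?_, hline⟩
  rw [hL, div_eq_one_iff_eq hab]
end

section
/- (Inner jump condition.) Suppose the WENO weights at both interfaces are consistent, i.e. 0 ≤ w_0, w_1 ≤ 1 with w_0 + w_1 = 1 and 0 ≤ w̃'_0, w̃'_1 ≤ 1 with w̃'_0 + w̃'_1 = 1. Then the inner jump satisfies the exact identity z^-_{i+1/2} - z^+_{i-1/2} = ((w_0 + w̃'_0)·Δz_{i+1/2} + (w_1 + w̃'_1)·Δz_{i-1/2})/2, and consequently: if Δz_{i+1/2} > 0 and Δz_{i-1/2} > 0 then z^-_{i+1/2} - z^+_{i-1/2} > 0, and if Δz_{i+1/2} < 0 and Δz_{i-1/2} < 0 then z^-_{i+1/2} - z^+_{i-1/2} < 0. Thus consistent weights automatically make the reconstruction locally monotonicity-preserving. -/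
section WeightedSum

variable {α : Type*} [Ring α] [LinearOrder α] [IsStrictOrderedRing α] {a b x y : α}

theorem mul_add_mul_pos (ha : 0 ≤ a) (hb : 0 ≤ b) (hab : 0 < a + b) (hx : 0 < x)
    (hy : 0 < y) : 0 < a * x + b * y := by
  rcases ha.lt_or_eq with ha | rfl
  · exact add_pos_of_pos_of_nonneg (mul_pos ha hx) (mul_nonneg hb hy.le)
  · rw [zero_add] at hab
    simpa using mul_pos hab hy

theorem mul_add_mul_neg (ha : 0 ≤ a) (hb : 0 ≤ b) (hab : 0 < a + b) (hx : x < 0)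
    (hy : y < 0) : a * x + b * y < 0 := by
  simpa only [mul_neg, ← neg_add, neg_pos] using
    mul_add_mul_pos ha hb hab (neg_pos.2 hx) (neg_pos.2 hy)

end WeightedSum

theorem weno_inner_jump_eq {zm z0 z1 w0 w1 w0' w1' : ℝ} (hw : w0 + w1 = 1)
    (hw' : w0' + w1' = 1) :
    (w0*(z0 + z1) + w1*(3*z0 - zm))/2 - (w0'*(3*z0 - z1) + w1'*(zm + z0))/2
      = ((w0 + w0')*(z1 - z0) + (w1 + w1')*(z0 - zm))/2 := by
  obtain rfl : w1 = 1 - w0 := by linarith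
  obtain rfl : w1' = 1 - w0' := by linarith
  ring

theorem weno_inner_jump_general (zm z0 z1 w0 w1 w0' w1' : ℝ)
    (hw : w0 + w1 = 1) (hw0 : 0 ≤ w0) (hw1 : 0 ≤ w1)
    (hw' : w0' + w1' = 1) (hw0' : 0 ≤ w0')
    (hw1' : 0 ≤ w1') :
    (w0*(z0 + z1) + w1*(3*z0 - zm))/2 - (w0'*(3*z0 - z1) + w1'*(zm + z0))/2
      = ((w0 + w0')*(z1 - z0) + (w1 + w1')*(z0 - zm))/2 ∧
    (z1 - z0 > 0 → z0 - zm > 0 →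
      (w0*(z0 + z1) + w1*(3*z0 - zm))/2 - (w0'*(3*z0 - z1) + w1'*(zm + z0))/2 > 0) ∧
    (z1 - z0 < 0 → z0 - zm < 0 →
      (w0*(z0 + z1) + w1*(3*z0 - zm))/2 - (w0'*(3*z0 - z1) + w1'*(zm + z0))/2 < 0) := by
  have hjump := weno_inner_jump_eq (zm := zm) (z0 := z0) (z1 := z1) hw hw'
  have ha : 0 ≤ w0 + w0' := add_nonneg hw0 hw0'
  have hb : 0 ≤ w1 + w1' := add_nonneg hw1 hw1'
  have hab : 0 < (w0 + w0') + (w1 + w1') := by linarith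
  refine ⟨hjump, fun h₁ h₀ => ?_, fun h₁ h₀ => ?_⟩ <;> rw [hjump]
  · exact div_pos (mul_add_mul_pos ha hb hab h₁ h₀) two_pos
  · exact div_neg_of_neg_of_pos (mul_add_mul_neg ha hb hab h₁ h₀) two_pos

/-- Inner jump condition: with consistent weights at both
interfaces, the inner jump `z⁻_{i+1/2} - z⁺_{i-1/2}` equals
`((w₀ + w̃'₀)Δz_{i+1/2} + (w₁ + w̃'₁)Δz_{i-1/2})/2`; consequently it is
positive when both undivided jumps are positive and negative when both are
negative (local monotonicity preservation). -/
theorem weno_inner_jump (zm z0 z1 w0 w1 w0' w1' : ℝ)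
    (hw : w0 + w1 = 1) (hw0 : 0 ≤ w0) (hw0u : w0 ≤ 1) (hw1 : 0 ≤ w1) (hw1u : w1 ≤ 1)
    (hw' : w0' + w1' = 1) (hw0' : 0 ≤ w0') (hw0u' : w0' ≤ 1)
    (hw1' : 0 ≤ w1') (hw1u' : w1' ≤ 1) :
    (w0*(z0 + z1) + w1*(3*z0 - zm))/2 - (w0'*(3*z0 - z1) + w1'*(zm + z0))/2
      = ((w0 + w0')*(z1 - z0) + (w1 + w1')*(z0 - zm))/2 ∧
    (z1 - z0 > 0 → z0 - zm > 0 →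
      (w0*(z0 + z1) + w1*(3*z0 - zm))/2 - (w0'*(3*z0 - z1) + w1'*(zm + z0))/2 > 0) ∧
    (z1 - z0 < 0 → z0 - zm < 0 →
      (w0*(z0 + z1) + w1*(3*z0 - zm))/2 - (w0'*(3*z0 - z1) + w1'*(zm + z0))/2 < 0) :=
  weno_inner_jump_general zm z0 z1 w0 w1 w0' w1' hw hw0 hw1 hw' hw0' hw1'
end

section
/- (Third-order accuracy of the perturbed WENO reconstruction.) Let h > 0 and let x_{i-1}, x_i, x_{i+1}, x_{i+2} be equally spaced with spacing h, and set x_{i+1/2} = x_i + h/2. Let z : ℝ → ℝ be three times continuously differentiable on [x_{i-1}, x_{i+2}] with |z''| ≤ M_2 and |z'''| ≤ M_3 there, and set z_j = z(x_j). Then the reconstructions satisfy the exact decompositions z^-_{i+1/2} = (-z_{i-1} + 6z_i + 3z_{i+1})/8 + C_1(z_{i-1} - 2z_i + z_{i+1}) and z^+_{i+1/2} = (3z_i + 6z_{i+1} - z_{i+2})/8 + C_2(z_i - 2z_{i+1} + z_{i+2}), where the first terms are the values at x_{i+1/2} of the quadratic interpolants through (x_{i-1}, x_i, x_{i+1}) and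 (x_i, x_{i+1}, x_{i+2}) respectively; moreover |z^-_{i+1/2} - z(x_{i+1/2})| ≤ (1/16)M_3 h³ + |C_1| M_2 h² and |z^+_{i+1/2} - z(x_{i+1/2})| ≤ (1/16)M_3 h³ + |C_2| M_2 h². In particular, if |C_1|, |C_2| ≤ K h for some K ≥ 0, then both reconstruction errors are at most (M_3/16 + K M_2) h³, i.e. the reconstruction is third-order accurate. -/
/-!
Both reconstructions are the quadratic interpolant of `z` at `x_{i+1/2}` plus `C` times a second
difference. For the interpolant through `a < b < c`, the function `z - L - K ω`, with
`ω(y) = (y - a)(y - b)(y - c)` and `K` chosen so that it also vanishes at `x`, has four zeros, so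
by Rolle's theorem its third derivative `z''' - 6K` vanishes somewhere: the error is
`z'''(ξ)/6 · ω(x)`, and `|ω(x_{i+1/2})| = 3h³/8`. In the same way `z - L` has three zeros, so the
second difference, which is `2h²` times the leading coefficient of `L`, equals `h² z''(ξ)`.
-/

open Set

theorem iteratedDerivWithin_of_mem_nhds {f : ℝ → ℝ} {s : Set ℝ} {x : ℝ} (n : ℕ)
    (hs : s ∈ nhds x) : iteratedDerivWithin n f s x = iteratedDeriv n f x := by
  rw [iteratedDerivWithin, iteratedDeriv, ← iteratedFDerivWithin_univ,
    iteratedFDerivWithin_congr_set (Filter.eventuallyEq_univ.mpr hs)]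

theorem abs_iteratedDeriv_le_of_abs_iteratedDerivWithin_Icc_le {f : ℝ → ℝ} {n : ℕ} {a b M : ℝ}
    (hM : ∀ x ∈ Icc a b, |iteratedDerivWithin n f (Icc a b) x| ≤ M) :
    ∀ x ∈ Ioo a b, |iteratedDeriv n f x| ≤ M := fun x hx => by
  rw [← iteratedDerivWithin_of_mem_nhds n (Icc_mem_nhds hx.1 hx.2)]
  exact hM x (Ioo_subset_Icc_self hx)

theorem exists_iteratedDeriv_eq_zero_of_strictMono {n : ℕ} {f : ℝ → ℝ} {p : Fin (n + 2) → ℝ}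
    (hp : StrictMono p) (hf : ContDiffOn ℝ (n + 1) f (Icc (p 0) (p (Fin.last _))))
    (hfp : ∀ i, f (p i) = 0) :
    ∃ ξ ∈ Ioo (p 0) (p (Fin.last _)), iteratedDeriv (n + 1) f ξ = 0 := by
  induction n generalizing f with
  | zero =>
    simpa using exists_deriv_eq_zero (hp Fin.zero_lt_one) hf.continuousOn
      ((hfp 0).trans (hfp 1).symm)
  | succ n ih =>
    have hrolle (i : Fin (n + 2)) : ∃ q ∈ Ioo (p i.castSucc) (p i.succ), deriv f q = 0 :=
      exists_deriv_eq_zero (hp i.castSucc_lt_succ)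
        (hf.continuousOn.mono (Icc_subset_Icc (hp.monotone (Fin.zero_le _))
          (hp.monotone (Fin.le_last _))))
        ((hfp _).trans (hfp _).symm)
    choose q hq hq0 using hrolle
    have hq_mono : StrictMono q := fun i j hij =>
      (hq i).2.trans ((hp.monotone (Fin.succ_le_castSucc_iff.2 hij)).trans_lt (hq j).1)
    have hsub : Icc (q 0) (q (Fin.last _)) ⊆ Ioo (p 0) (p (Fin.last _)) :=
      Icc_subset_Ioo (hq 0).1 (hq _).2
    have hf' : ContDiffOn ℝ (n + 1) (deriv f) (Ioo (p 0) (p (Fin.last _))) :=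
      (hf.mono Ioo_subset_Icc_self).deriv_of_isOpen isOpen_Ioo (by push_cast; rfl)
    obtain ⟨ξ, hξ, hξ0⟩ := ih hq_mono (hf'.mono hsub) hq0
    exact ⟨ξ, hsub (Ioo_subset_Icc_self hξ), by rwa [iteratedDeriv_succ']⟩

theorem exists_iteratedDeriv_eq_of_strictMono {n : ℕ} {f g : ℝ → ℝ} {p : Fin (n + 2) → ℝ}
    (hp : StrictMono p) (hf : ContDiffOn ℝ (n + 1) f (Icc (p 0) (p (Fin.last _))))
    (hg : ContDiff ℝ (n + 1) g) (hfg : ∀ i, f (p i) = g (p i)) :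
    ∃ ξ ∈ Ioo (p 0) (p (Fin.last _)), iteratedDeriv (n + 1) f ξ = iteratedDeriv (n + 1) g ξ := by
  obtain ⟨ξ, hξ, hξ0⟩ := exists_iteratedDeriv_eq_zero_of_strictMono hp
    (hf.sub hg.contDiffOn) fun i => sub_eq_zero.2 (hfg i)
  refine ⟨ξ, hξ, sub_eq_zero.1 ?_⟩
  rwa [← iteratedDeriv_sub (hf.contDiffAt (Icc_mem_nhds hξ.1 hξ.2)) hg.contDiffAt]

theorem iteratedDeriv_two_cubic (p q r s x : ℝ) :
    iteratedDeriv 2 (fun y => p * y ^ 3 + q * y ^ 2 + r * y + s) x = 6 * p * x + 2 * q := by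
  have h : deriv (fun y => p * y ^ 3 + q * y ^ 2 + r * y + s)
      = fun y => 3 * p * y ^ 2 + 2 * q * y + r := by
    ext y; simp (disch := fun_prop) [deriv_fun_add, deriv_fun_mul]; ring
  rw [iteratedDeriv_succ, iteratedDeriv_one, h]
  simp (disch := fun_prop) [deriv_fun_add, deriv_fun_mul]; ring

theorem iteratedDeriv_three_cubic (p q r s x : ℝ) :
    iteratedDeriv 3 (fun y => p * y ^ 3 + q * y ^ 2 + r * y + s) x = 6 * p := by
  rw [iteratedDeriv_succ, funext (iteratedDeriv_two_cubic p q r s)]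
  simp (disch := fun_prop) [deriv_fun_add, deriv_fun_mul]

noncomputable section

def quadInterp (f : ℝ → ℝ) (a b c x : ℝ) : ℝ :=
  f a * ((x - b) * (x - c)) / ((a - b) * (a - c))
    + f b * ((x - a) * (x - c)) / ((b - a) * (b - c))
    + f c * ((x - a) * (x - b)) / ((c - a) * (c - b))

/-- The leading coefficient of `quadInterp f a b c`. -/
def divDiff2 (f : ℝ → ℝ) (a b c : ℝ) : ℝ :=
  f a / ((a - b) * (a - c)) + f b / ((b - a) * (b - c)) + f c / ((c - a) * (c - b))

end

section QuadInterp

variable {f : ℝ → ℝ} {a b c : ℝ}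

theorem quadInterp_left (hab : a ≠ b) (hac : a ≠ c) : quadInterp f a b c a = f a := by
  have := sub_ne_zero.2 hab; have := sub_ne_zero.2 hac
  unfold quadInterp; field_simp; ring

theorem quadInterp_middle (hab : a ≠ b) (hbc : b ≠ c) : quadInterp f a b c b = f b := by
  have := sub_ne_zero.2 hab; have := sub_ne_zero.2 hbc
  unfold quadInterp; field_simp; ring

theorem quadInterp_right (hac : a ≠ c) (hbc : b ≠ c) : quadInterp f a b c c = f c := by
  have := sub_ne_zero.2 hac; have := sub_ne_zero.2 hbc
  unfold quadInterp; field_simp; ring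

variable (f a b c) in
theorem quadInterp_add_mul_eq_cubic (K : ℝ) :
    ∃ r s : ℝ, ∀ y, quadInterp f a b c y + K * ((y - a) * (y - b) * (y - c))
      = K * y ^ 3 + (divDiff2 f a b c - K * (a + b + c)) * y ^ 2 + r * y + s :=
  ⟨K * (a * b + a * c + b * c) - (f a * (b + c) / ((a - b) * (a - c))
      + f b * (a + c) / ((b - a) * (b - c)) + f c * (a + b) / ((c - a) * (c - b))),
    f a * (b * c) / ((a - b) * (a - c)) + f b * (a * c) / ((b - a) * (b - c))
      + f c * (a * b) / ((c - a) * (c - b)) - K * (a * b * c),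
    fun y => by unfold quadInterp divDiff2; ring⟩

variable (f a b c) in
theorem contDiff_quadInterp {n : WithTop ℕ∞} : ContDiff ℝ n (quadInterp f a b c) := by
  unfold quadInterp; fun_prop

variable (f a b c) in
theorem iteratedDeriv_two_quadInterp (x : ℝ) :
    iteratedDeriv 2 (quadInterp f a b c) x = 2 * divDiff2 f a b c := by
  obtain ⟨r, s, h⟩ := quadInterp_add_mul_eq_cubic f a b c 0
  have hcubic : quadInterp f a b c
      = fun y => 0 * y ^ 3 + (divDiff2 f a b c - 0 * (a + b + c)) * y ^ 2 + r * y + s :=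
    funext fun y => by rw [← h]; ring
  rw [hcubic, iteratedDeriv_two_cubic]; ring

variable (f a b c) in
theorem iteratedDeriv_three_quadInterp_add_mul (K x : ℝ) :
    iteratedDeriv 3 (fun y => quadInterp f a b c y + K * ((y - a) * (y - b) * (y - c))) x
      = 6 * K := by
  obtain ⟨r, s, h⟩ := quadInterp_add_mul_eq_cubic f a b c K
  simp_rw [h]
  exact iteratedDeriv_three_cubic _ _ _ _ _

theorem exists_iteratedDeriv_two_eq_divDiff2 (hab : a < b) (hbc : b < c)
    (hf : ContDiffOn ℝ 2 f (Icc a c)) :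
    ∃ ξ ∈ Ioo a c, iteratedDeriv 2 f ξ = 2 * divDiff2 f a b c := by
  have hp : StrictMono ![a, b, c] := Fin.strictMono_iff_lt_succ.2 fun i => by
    fin_cases i <;> simpa
  obtain ⟨ξ, hξ, h⟩ := exists_iteratedDeriv_eq_of_strictMono (n := 1) hp hf
    (contDiff_quadInterp f a b c) fun i => by
      fin_cases i
      · exact (quadInterp_left hab.ne (hab.trans hbc).ne).symm
      · exact (quadInterp_middle hab.ne hbc.ne).symm
      · exact (quadInterp_right (hab.trans hbc).ne hbc.ne).symm
  exact ⟨ξ, hξ, h.trans (iteratedDeriv_two_quadInterp f a b c ξ)⟩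

theorem exists_sub_quadInterp_eq {x : ℝ} (hab : a < b) (hbc : b < c)
    (hf : ContDiffOn ℝ 3 f (Icc a c)) (hx : x ∈ Ioo a c) :
    ∃ ξ ∈ Ioo a c,
      f x - quadInterp f a b c x = iteratedDeriv 3 f ξ / 6 * ((x - a) * (x - b) * (x - c)) := by
  rcases eq_or_ne x b with rfl | hxb
  · exact ⟨x, hx, by simp [quadInterp_middle hab.ne hbc.ne]⟩
  have hω : (x - a) * (x - b) * (x - c) ≠ 0 := mul_ne_zero (mul_ne_zero
    (sub_ne_zero.2 hx.1.ne') (sub_ne_zero.2 hxb)) (sub_ne_zero.2 hx.2.ne)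
  set K := (f x - quadInterp f a b c x) / ((x - a) * (x - b) * (x - c)) with hK
  set g := fun y => quadInterp f a b c y + K * ((y - a) * (y - b) * (y - c))
  have hg : ContDiff ℝ 3 g := (contDiff_quadInterp f a b c).add (by fun_prop)
  have hga : f a = g a := by simp [g, quadInterp_left hab.ne (hab.trans hbc).ne]
  have hgb : f b = g b := by simp [g, quadInterp_middle hab.ne hbc.ne]
  have hgc : f c = g c := by simp [g, quadInterp_right (hab.trans hbc).ne hbc.ne]
  have hgx : f x = g x := by simp only [g, hK, div_mul_cancel₀ _ hω]; ring
  obtain ⟨ξ, hξ, h⟩ : ∃ ξ ∈ Ioo a c, iteratedDeriv 3 f ξ = iteratedDeriv 3 g ξ := by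
    rcases hxb.lt_or_gt with hxb | hbx
    · have hp : StrictMono ![a, x, b, c] := Fin.strictMono_iff_lt_succ.2 fun i => by
        fin_cases i <;> simp [hx.1, hxb, hbc]
      exact exists_iteratedDeriv_eq_of_strictMono (n := 2) hp hf hg fun i => by
        fin_cases i <;> assumption
    · have hp : StrictMono ![a, b, x, c] := Fin.strictMono_iff_lt_succ.2 fun i => by
        fin_cases i <;> simp [hab, hbx, hx.2]
      exact exists_iteratedDeriv_eq_of_strictMono (n := 2) hp hf hg fun i => by
        fin_cases i <;> assumption
  refine ⟨ξ, hξ, ?_⟩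
  rw [h, iteratedDeriv_three_quadInterp_add_mul, mul_div_cancel_left₀ K (by norm_num), hK,
    div_mul_cancel₀ _ hω]

theorem abs_divDiff2_le {M : ℝ} (hab : a < b) (hbc : b < c) (hf : ContDiffOn ℝ 2 f (Icc a c))
    (hM : ∀ ξ ∈ Ioo a c, |iteratedDeriv 2 f ξ| ≤ M) : |divDiff2 f a b c| ≤ M / 2 := by
  obtain ⟨ξ, hξ, h⟩ := exists_iteratedDeriv_two_eq_divDiff2 hab hbc hf
  have := hM ξ hξ
  rw [h, abs_mul, abs_two] at this
  linarith

theorem abs_sub_quadInterp_le {M x : ℝ} (hab : a < b) (hbc : b < c)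
    (hf : ContDiffOn ℝ 3 f (Icc a c)) (hM : ∀ ξ ∈ Ioo a c, |iteratedDeriv 3 f ξ| ≤ M)
    (hx : x ∈ Ioo a c) :
    |f x - quadInterp f a b c x| ≤ M / 6 * |(x - a) * (x - b) * (x - c)| := by
  obtain ⟨ξ, hξ, h⟩ := exists_sub_quadInterp_eq hab hbc hf hx
  rw [h, abs_mul, abs_div, abs_of_pos (by norm_num : (0 : ℝ) < 6)]
  gcongr
  exact hM ξ hξ

section EquallySpaced

variable {h : ℝ} (hba : b - a = h) (hcb : c - b = h)
include hba hcb

theorem divDiff2_of_sub_eq : divDiff2 f a b c = (f a - 2 * f b + f c) / (2 * h ^ 2) := by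
  obtain rfl : b = a + h := by linarith
  obtain rfl : c = a + h + h := by linarith
  unfold divDiff2
  ring

theorem quadInterp_midpoint_left (hh : h ≠ 0) :
    quadInterp f a b c (a + h / 2) = (3 * f a + 6 * f b - f c) / 8 := by
  obtain rfl : b = a + h := by linarith
  obtain rfl : c = a + h + h := by linarith
  unfold quadInterp
  ring_nf
  field_simp

theorem quadInterp_midpoint_right (hh : h ≠ 0) :
    quadInterp f a b c (b + h / 2) = (-f a + 6 * f b + 3 * f c) / 8 := by
  obtain rfl : b = a + h := by linarith
  obtain rfl : c = a + h + h := by linarith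
  unfold quadInterp
  ring_nf
  field_simp

end EquallySpaced

theorem abs_quadInterp_add_mul_sub_le {h M2 M3 x : ℝ} (hba : b - a = h) (hcb : c - b = h)
    (hh : 0 < h) (hf : ContDiffOn ℝ 3 f (Icc a c))
    (hM2 : ∀ ξ ∈ Ioo a c, |iteratedDeriv 2 f ξ| ≤ M2)
    (hM3 : ∀ ξ ∈ Ioo a c, |iteratedDeriv 3 f ξ| ≤ M3) (hx : x ∈ Ioo a c) (C : ℝ) :
    |quadInterp f a b c x + C * (f a - 2 * f b + f c) - f x|
      ≤ M3 / 6 * |(x - a) * (x - b) * (x - c)| + |C| * M2 * h ^ 2 := by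
  have hab : a < b := by linarith
  have hbc : b < c := by linarith
  have hΔ : f a - 2 * f b + f c = 2 * h ^ 2 * divDiff2 f a b c := by
    rw [divDiff2_of_sub_eq hba hcb]
    field_simp
  have hD := abs_divDiff2_le hab hbc (hf.of_le (by norm_num)) hM2
  have hE := abs_sub_quadInterp_le hab hbc hf hM3 hx
  calc _ = |C * (2 * h ^ 2 * divDiff2 f a b c) - (f x - quadInterp f a b c x)| := by
        rw [hΔ]; ring_nf
    _ ≤ |C * (2 * h ^ 2 * divDiff2 f a b c)| + |f x - quadInterp f a b c x| := abs_sub _ _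
    _ = |C| * (2 * h ^ 2) * |divDiff2 f a b c| + |f x - quadInterp f a b c x| := by
        rw [abs_mul, abs_mul, abs_of_pos (by positivity : (0 : ℝ) < 2 * h ^ 2)]; ring
    _ ≤ |C| * (2 * h ^ 2) * (M2 / 2) + M3 / 6 * |(x - a) * (x - b) * (x - c)| := by gcongr
    _ = _ := by ring

end QuadInterp

/-- Third-order accuracy of the perturbed WENO reconstruction:
with equally spaced points `x_{i-1} = x_i - h`, `x_{i+1} = x_i + h`,
`x_{i+2} = x_i + 2h` and `x_{i+1/2} = x_i + h/2`, and `z` three times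
continuously differentiable on `[x_{i-1}, x_{i+2}]` with `|z''| ≤ M₂`,
`|z'''| ≤ M₃` there: the reconstructions decompose exactly as
`z⁻ = (-z_{i-1} + 6z_i + 3z_{i+1})/8 + C₁(z_{i-1} - 2z_i + z_{i+1})` and
`z⁺ = (3z_i + 6z_{i+1} - z_{i+2})/8 + C₂(z_i - 2z_{i+1} + z_{i+2})`, whose
first terms are the values at `x_{i+1/2}` of the quadratic (Lagrange)
interpolants through `(x_{i-1}, x_i, x_{i+1})` and `(x_i, x_{i+1}, x_{i+2})`;
the errors satisfy `|z⁻ - z(x_{i+1/2})| ≤ (1/16)M₃h³ + |C₁|M₂h²` and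
`|z⁺ - z(x_{i+1/2})| ≤ (1/16)M₃h³ + |C₂|M₂h²`; in particular if
`|C₁|, |C₂| ≤ Kh` then both errors are at most `(M₃/16 + KM₂)h³`. -/
theorem weno_third_order_accuracy (h : ℝ) (hh : 0 < h) (xi : ℝ)
    (z : ℝ → ℝ) (M2 M3 : ℝ)
    (hz : ContDiffOn ℝ 3 z (Set.Icc (xi - h) (xi + 2*h)))
    (hM2 : ∀ x ∈ Set.Icc (xi - h) (xi + 2*h),
      |iteratedDerivWithin 2 z (Set.Icc (xi - h) (xi + 2*h)) x| ≤ M2)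
    (hM3 : ∀ x ∈ Set.Icc (xi - h) (xi + 2*h),
      |iteratedDerivWithin 3 z (Set.Icc (xi - h) (xi + 2*h)) x| ≤ M3)
    (C1 C2 : ℝ) :
    -- exact decomposition of the left reconstruction
    ((3/4 + 2*C1)*(z xi + z (xi + h)) + (1/4 - 2*C1)*(3*(z xi) - z (xi - h)))/2
      = (-(z (xi - h)) + 6*(z xi) + 3*(z (xi + h)))/8
        + C1*(z (xi - h) - 2*(z xi) + z (xi + h)) ∧
    -- exact decomposition of the right reconstruction
    ((1/4 - 2*C2)*(3*(z (xi + h)) - z (xi + 2*h))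
        + (3/4 + 2*C2)*(z xi + z (xi + h)))/2
      = (3*(z xi) + 6*(z (xi + h)) - z (xi + 2*h))/8
        + C2*(z xi - 2*(z (xi + h)) + z (xi + 2*h)) ∧
    -- the first term is the quadratic Lagrange interpolant through
    -- (x_{i-1}, x_i, x_{i+1}) evaluated at x_{i+1/2}
    (-(z (xi - h)) + 6*(z xi) + 3*(z (xi + h)))/8
      = z (xi - h) * (((xi + h/2) - xi)*((xi + h/2) - (xi + h)))
          / (((xi - h) - xi)*((xi - h) - (xi + h)))
        + z xi * (((xi + h/2) - (xi - h))*((xi + h/2) - (xi + h)))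
          / ((xi - (xi - h))*(xi - (xi + h)))
        + z (xi + h) * (((xi + h/2) - (xi - h))*((xi + h/2) - xi))
          / (((xi + h) - (xi - h))*((xi + h) - xi)) ∧
    -- the first term is the quadratic Lagrange interpolant through
    -- (x_i, x_{i+1}, x_{i+2}) evaluated at x_{i+1/2}
    (3*(z xi) + 6*(z (xi + h)) - z (xi + 2*h))/8
      = z xi * (((xi + h/2) - (xi + h))*((xi + h/2) - (xi + 2*h)))
          / ((xi - (xi + h))*(xi - (xi + 2*h)))
        + z (xi + h) * (((xi + h/2) - xi)*((xi + h/2) - (xi + 2*h)))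
          / (((xi + h) - xi)*((xi + h) - (xi + 2*h)))
        + z (xi + 2*h) * (((xi + h/2) - xi)*((xi + h/2) - (xi + h)))
          / (((xi + 2*h) - xi)*((xi + 2*h) - (xi + h))) ∧
    -- third-order error bounds
    |((3/4 + 2*C1)*(z xi + z (xi + h)) + (1/4 - 2*C1)*(3*(z xi) - z (xi - h)))/2
        - z (xi + h/2)|
      ≤ (1/16)*M3*h^3 + |C1| * M2 * h^2 ∧
    |((1/4 - 2*C2)*(3*(z (xi + h)) - z (xi + 2*h))
        + (3/4 + 2*C2)*(z xi + z (xi + h)))/2 - z (xi + h/2)|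
      ≤ (1/16)*M3*h^3 + |C2| * M2 * h^2 ∧
    -- if |C₁|, |C₂| ≤ Kh then both errors are O(h³)
    (∀ K : ℝ, 0 ≤ K → |C1| ≤ K*h → |C2| ≤ K*h →
      |((3/4 + 2*C1)*(z xi + z (xi + h))
          + (1/4 - 2*C1)*(3*(z xi) - z (xi - h)))/2 - z (xi + h/2)|
        ≤ (M3/16 + K*M2)*h^3 ∧
      |((1/4 - 2*C2)*(3*(z (xi + h)) - z (xi + 2*h))
          + (3/4 + 2*C2)*(z xi + z (xi + h)))/2 - z (xi + h/2)|
        ≤ (M3/16 + K*M2)*h^3) := by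

  have side : ∀ {a b c x : ℝ} (C : ℝ), b - a = h → c - b = h → xi - h ≤ a → c ≤ xi + 2*h →
      x ∈ Ioo a c → |(x - a) * (x - b) * (x - c)| = 3 * h^3 / 8 →
      |quadInterp z a b c x + C * (z a - 2 * z b + z c) - z x|
        ≤ (1/16)*M3*h^3 + |C| * M2 * h^2 := by
    intro a b c x C hba hcb ha hc hx hω
    have hIoo : Ioo a c ⊆ Ioo (xi - h) (xi + 2*h) := Ioo_subset_Ioo ha hc
    refine (abs_quadInterp_add_mul_sub_le hba hcb hh (hz.mono (Icc_subset_Icc ha hc))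
      (fun ξ hξ => abs_iteratedDeriv_le_of_abs_iteratedDerivWithin_Icc_le hM2 ξ (hIoo hξ))
      (fun ξ hξ => abs_iteratedDeriv_le_of_abs_iteratedDerivWithin_Icc_le hM3 ξ (hIoo hξ))
      hx C).trans_eq ?_
    rw [hω]; ring
  have hL := quadInterp_midpoint_right (f := z) (a := xi - h) (b := xi) (c := xi + h)
    (by ring) (by ring) hh.ne'
  have hR := quadInterp_midpoint_left (f := z) (a := xi) (b := xi + h) (c := xi + 2*h)
    (by ring) (by ring) hh.ne'
  set zL := ((3/4 + 2*C1)*(z xi + z (xi + h)) + (1/4 - 2*C1)*(3*(z xi) - z (xi - h)))/2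
  set zR := ((1/4 - 2*C2)*(3*(z (xi + h)) - z (xi + 2*h))
    + (3/4 + 2*C2)*(z xi + z (xi + h)))/2
  have errL : |zL - z (xi + h/2)| ≤ (1/16)*M3*h^3 + |C1| * M2 * h^2 := by
    rw [show zL = quadInterp z (xi - h) xi (xi + h) (xi + h/2)
      + C1 * (z (xi - h) - 2 * z xi + z (xi + h)) by rw [hL]; ring]
    exact side C1 (by ring) (by ring) le_rfl (by linarith) ⟨by linarith, by linarith⟩ (by
      rw [show (xi + h/2 - (xi - h)) * (xi + h/2 - xi) * (xi + h/2 - (xi + h))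
        = -(3 * h^3 / 8) by ring, abs_neg, abs_of_pos (by positivity)])
  have errR : |zR - z (xi + h/2)| ≤ (1/16)*M3*h^3 + |C2| * M2 * h^2 := by
    rw [show zR = quadInterp z xi (xi + h) (xi + 2*h) (xi + h/2)
      + C2 * (z xi - 2 * z (xi + h) + z (xi + 2*h)) by rw [hR]; ring]
    exact side C2 (by ring) (by ring) (by linarith) le_rfl ⟨by linarith, by linarith⟩ (by
      rw [show (xi + h/2 - xi) * (xi + h/2 - (xi + h)) * (xi + h/2 - (xi + 2*h))
        = 3 * h^3 / 8 by ring, abs_of_pos (by positivity)])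
  have hM2_nonneg : 0 ≤ M2 := (abs_nonneg _).trans (hM2 xi ⟨by linarith, by linarith⟩)
  refine ⟨by ring, by ring, hL.symm, hR.symm, errL, errR, fun K _ hC1 hC2 => ?_⟩
  have hCK : ∀ C : ℝ, |C| ≤ K*h → (1/16)*M3*h^3 + |C| * M2 * h^2 ≤ (M3/16 + K*M2)*h^3 :=
    fun C hC => by nlinarith [mul_le_mul_of_nonneg_right hC (by positivity : 0 ≤ M2 * h^2)]
  exact ⟨errL.trans (hCK C1 hC1), errR.trans (hCK C2 hC2)⟩
end

section
/- (Discrete entropy stability of the TeCNO flux; Lemma 2.1.) Suppose that at the two interfaces i-1/2 and i+1/2 of cell i the entropy conservation condition ⟨v_{i+1} - v_i, f̃_{i+1/2}⟩ = Ψ_{i+1} - Ψ_i holds, and that the reconstructed jumps satisfy the componentwise sign property (⟦z⟧_{i+1/2})_k · (Δz_{i+1/2})_k ≥ 0 for every component k (at both interfaces). Then the cell entropy inequality ⟨v_i, f_{i+1/2} - f_{i-1/2}⟩ ≥ q_{i+1/2} - q_{i-1/2} holds, so that along the semi-discrete scheme du_i/dt = -(f_{i+1/2} - f_{i-1/2})/h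 the discrete entropy production dη(u_i)/dt + (q_{i+1/2} - q_{i-1/2})/h is nonpositive. -/
/-!
Tadmor's argument: the cell entropy inequality follows once each interface flux is entropy
stable, `⟨v_R - v_L, f⟩ ≤ Ψ_R - Ψ_L`, since the Ψ's and the centred averages in `q` telescope
against `⟨v_i, ·⟩`. For the TeCNO flux the defect `Ψ_R - Ψ_L - ⟨v_R - v_L, f⟩` equals half of
`∑ₖ Λₖ ⟦z⟧ₖ (Δz)ₖ`, which the sign property makes nonnegative.
-/

open Matrix

variable {ι : Type*} [Fintype ι]

noncomputable def numericalEntropyFlux (vL vR : ι → ℝ) (ΨL ΨR : ℝ) (f : ι → ℝ) : ℝ :=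
  ((1/2 : ℝ) • (vL + vR)) ⬝ᵥ f - (ΨL + ΨR) / 2

theorem numericalEntropyFlux_sub_le_dotProduct_sub {vim vi vip fL fR : ι → ℝ} {Ψim Ψi Ψip : ℝ}
    (hL : (vi - vim) ⬝ᵥ fL ≤ Ψi - Ψim) (hR : (vip - vi) ⬝ᵥ fR ≤ Ψip - Ψi) :
    numericalEntropyFlux vi vip Ψi Ψip fR - numericalEntropyFlux vim vi Ψim Ψi fL
      ≤ vi ⬝ᵥ (fR - fL) := by
  simp only [numericalEntropyFlux, smul_dotProduct, add_dotProduct, dotProduct_sub,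
    sub_dotProduct, smul_eq_mul] at *
  linarith

theorem dotProduct_mulVec_diagonal_mulVec [DecidableEq ι] (w : ι → ℝ)
    (R : Matrix ι ι ℝ) (Λ j : ι → ℝ) :
    w ⬝ᵥ (R *ᵥ (diagonal Λ *ᵥ j)) = ∑ k, Λ k * (j k * (Rᵀ *ᵥ w) k) := by
  rw [dotProduct_mulVec, ← mulVec_transpose, dotProduct]
  exact Finset.sum_congr rfl fun k _ => by rw [mulVec_diagonal]; ring

theorem dotProduct_mulVec_diagonal_mulVec_nonneg [DecidableEq ι] {w : ι → ℝ}
    {R : Matrix ι ι ℝ} {Λ j : ι → ℝ} (hΛ : ∀ k, 0 ≤ Λ k) (hsign : ∀ k, 0 ≤ j k * (Rᵀ *ᵥ w) k) :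
    0 ≤ w ⬝ᵥ (R *ᵥ (diagonal Λ *ᵥ j)) := by
  rw [dotProduct_mulVec_diagonal_mulVec]
  exact Finset.sum_nonneg fun k _ => mul_nonneg (hΛ k) (hsign k)

theorem dotProduct_sub_tecno_flux_le [DecidableEq ι] {vL vR ft : ι → ℝ} {ΨL ΨR : ℝ}
    {R : Matrix ι ι ℝ} {Λ j : ι → ℝ} (hΛ : ∀ k, 0 ≤ Λ k)
    (hEC : (vR - vL) ⬝ᵥ ft = ΨR - ΨL) (hsign : ∀ k, 0 ≤ j k * (Rᵀ *ᵥ (vR - vL)) k) :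
    (vR - vL) ⬝ᵥ (ft - (1/2 : ℝ) • (R *ᵥ (diagonal Λ *ᵥ j))) ≤ ΨR - ΨL := by
  have hdiss := dotProduct_mulVec_diagonal_mulVec_nonneg hΛ hsign
  rw [dotProduct_sub, dotProduct_smul, smul_eq_mul, hEC]
  linarith

theorem tecno_entropy_stability_general
    (d : ℕ)
    (vim vi vip : Fin d → ℝ) (Ψim Ψi Ψip : ℝ)
    (ftL ftR : Fin d → ℝ)
    (RL RR : Matrix (Fin d) (Fin d) ℝ)
    (ΛL ΛR : Fin d → ℝ)
    (hΛL : ∀ k, 0 ≤ ΛL k) (hΛR : ∀ k, 0 ≤ ΛR k)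
    (jL jR : Fin d → ℝ)
    (hECL : (vi - vim) ⬝ᵥ ftL = Ψi - Ψim)
    (hECR : (vip - vi) ⬝ᵥ ftR = Ψip - Ψi)
    (hsignL : ∀ k, 0 ≤ jL k * (RLᵀ *ᵥ (vi - vim)) k)
    (hsignR : ∀ k, 0 ≤ jR k * (RRᵀ *ᵥ (vip - vi)) k)
    (fL fR : Fin d → ℝ) (qL qR : ℝ)
    (hfL : fL = ftL - (1/2 : ℝ) • (RL *ᵥ (Matrix.diagonal ΛL *ᵥ jL)))
    (hfR : fR = ftR - (1/2 : ℝ) • (RR *ᵥ (Matrix.diagonal ΛR *ᵥ jR)))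
    (hqL : qL = ((1/2 : ℝ) • (vim + vi)) ⬝ᵥ fL - (Ψim + Ψi)/2)
    (hqR : qR = ((1/2 : ℝ) • (vi + vip)) ⬝ᵥ fR - (Ψi + Ψip)/2)
    (h : ℝ) (hh : 0 < h) :
    vi ⬝ᵥ (fR - fL) ≥ qR - qL ∧
    vi ⬝ᵥ (-(1/h) • (fR - fL)) + (qR - qL)/h ≤ 0 := by
  have hstableL : (vi - vim) ⬝ᵥ fL ≤ Ψi - Ψim :=
    hfL ▸ dotProduct_sub_tecno_flux_le hΛL hECL hsignL
  have hstableR : (vip - vi) ⬝ᵥ fR ≤ Ψip - Ψi :=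
    hfR ▸ dotProduct_sub_tecno_flux_le hΛR hECR hsignR
  have hcell : qR - qL ≤ vi ⬝ᵥ (fR - fL) := by
    rw [hqL, hqR]
    exact numericalEntropyFlux_sub_le_dotProduct_sub hstableL hstableR
  refine ⟨hcell, ?_⟩
  rw [dotProduct_smul, smul_eq_mul, ← sub_nonneg]
  calc (0 : ℝ) ≤ (vi ⬝ᵥ (fR - fL) - (qR - qL)) / h := div_nonneg (sub_nonneg.2 hcell) hh.le
    _ = 0 - (-(1/h) * vi ⬝ᵥ (fR - fL) + (qR - qL) / h) := by ring

/-- Discrete entropy stability of the TeCNO flux; Lemma 2.1: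
if the entropy conservation condition `⟨v_{i+1} - v_i, f̃_{i+1/2}⟩ = Ψ_{i+1} - Ψ_i`
holds at both interfaces of cell `i`, and the reconstructed jumps satisfy the
componentwise sign property with respect to the scaled entropy-variable jumps
`Δz_{i+1/2} = R_{i+1/2}ᵀ(v_{i+1} - v_i)`, then the TeCNO flux
`f_{i+1/2} = f̃_{i+1/2} - (1/2)R_{i+1/2}Λ_{i+1/2}⟦z⟧_{i+1/2}` satisfies the cell
entropy inequality `⟨v_i, f_{i+1/2} - f_{i-1/2}⟩ ≥ q_{i+1/2} - q_{i-1/2}`, so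
that along `du_i/dt = -(f_{i+1/2} - f_{i-1/2})/h` the discrete entropy
production `dη(u_i)/dt + (q_{i+1/2} - q_{i-1/2})/h` is nonpositive. -/
theorem tecno_entropy_stability
    (d : ℕ) (hd : 1 ≤ d)
    (vim vi vip : Fin d → ℝ) (Ψim Ψi Ψip : ℝ)
    (ftL ftR : Fin d → ℝ)
    (RL RR : Matrix (Fin d) (Fin d) ℝ)
    (ΛL ΛR : Fin d → ℝ)
    (hΛL : ∀ k, 0 ≤ ΛL k) (hΛR : ∀ k, 0 ≤ ΛR k)
    (jL jR : Fin d → ℝ)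
    (hECL : (vi - vim) ⬝ᵥ ftL = Ψi - Ψim)
    (hECR : (vip - vi) ⬝ᵥ ftR = Ψip - Ψi)
    (hsignL : ∀ k, 0 ≤ jL k * (RLᵀ *ᵥ (vi - vim)) k)
    (hsignR : ∀ k, 0 ≤ jR k * (RRᵀ *ᵥ (vip - vi)) k)
    (fL fR : Fin d → ℝ) (qL qR : ℝ)
    (hfL : fL = ftL - (1/2 : ℝ) • (RL *ᵥ (Matrix.diagonal ΛL *ᵥ jL)))
    (hfR : fR = ftR - (1/2 : ℝ) • (RR *ᵥ (Matrix.diagonal ΛR *ᵥ jR)))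
    (hqL : qL = ((1/2 : ℝ) • (vim + vi)) ⬝ᵥ fL - (Ψim + Ψi)/2)
    (hqR : qR = ((1/2 : ℝ) • (vi + vip)) ⬝ᵥ fR - (Ψi + Ψip)/2)
    (h : ℝ) (hh : 0 < h) :
    vi ⬝ᵥ (fR - fL) ≥ qR - qL ∧
    vi ⬝ᵥ (-(1/h) • (fR - fL)) + (qR - qL)/h ≤ 0 :=
  tecno_entropy_stability_general d vim vi vip Ψim Ψi Ψip ftL ftR RL RR ΛL ΛR hΛL hΛR jL jR hECL
    hECR hsignL hsignR fL fR qL qR hfL hfR hqL hqR h hh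
end

section
/- (Discrete entropy conservation; Tadmor's identity.) Suppose the two-point fluxes satisfy the entropy conservation condition ⟨v_{i+1} - v_i, f̃_{i+1/2}⟩ = Ψ_{i+1} - Ψ_i at the interfaces i-1/2 and i+1/2. Define the numerical entropy flux q̃_{i+1/2} = ⟨(v_i + v_{i+1})/2, f̃_{i+1/2}⟩ - (Ψ_i + Ψ_{i+1})/2. Then the exact identity ⟨v_i, f̃_{i+1/2} - f̃_{i-1/2}⟩ = q̃_{i+1/2} - q̃_{i-1/2} holds; consequently, along the semi-discrete scheme du_i/dt = -(f̃_{i+1/2} - f̃_{i-1/2})/h, the discrete entropy equality dη(u_i)/dt + (q̃_{i+1/2} - q̃_{i-1/2})/h = 0 holds. -/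
open Matrix

/-!
Under the entropy conservation condition `⟨w - v, f⟩ = Ψ_w - Ψ_v`, the mean-value
entropy flux `⟨(v + w)/2, f⟩ - (Ψ_v + Ψ_w)/2` equals both one-sided expressions
`⟨v, f⟩ - Ψ_v` and `⟨w, f⟩ - Ψ_w`. Writing both interface fluxes of cell `i` in the
form seen from cell `i`, the potentials `Ψ_i` cancel in `q̃_{i+1/2} - q̃_{i-1/2}`,
leaving `⟨v_i, f̃_{i+1/2} - f̃_{i-1/2}⟩`.
-/

section EntropyFlux

variable {K ι : Type*} [Field K] [NeZero (2 : K)] [Fintype ι]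

def entropyFlux (v w : ι → K) (Ψv Ψw : K) (f : ι → K) : K :=
  ((1 / 2 : K) • (v + w)) ⬝ᵥ f - (Ψv + Ψw) / 2

theorem entropyFlux_eq_left {v w f : ι → K} {Ψv Ψw : K}
    (hEC : (w - v) ⬝ᵥ f = Ψw - Ψv) :
    entropyFlux v w Ψv Ψw f = v ⬝ᵥ f - Ψv := by
  rw [sub_dotProduct] at hEC
  simp only [entropyFlux, smul_dotProduct, add_dotProduct, smul_eq_mul]
  field_simp
  linear_combination hEC

theorem entropyFlux_eq_right {v w f : ι → K} {Ψv Ψw : K}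
    (hEC : (w - v) ⬝ᵥ f = Ψw - Ψv) :
    entropyFlux v w Ψv Ψw f = w ⬝ᵥ f - Ψw := by
  rw [entropyFlux_eq_left hEC]
  rw [sub_dotProduct] at hEC
  linear_combination -hEC

theorem dotProduct_sub_eq_entropyFlux_sub {vim vi vip fL fR : ι → K} {Ψim Ψi Ψip : K}
    (hECL : (vi - vim) ⬝ᵥ fL = Ψi - Ψim) (hECR : (vip - vi) ⬝ᵥ fR = Ψip - Ψi) :
    vi ⬝ᵥ (fR - fL) = entropyFlux vi vip Ψi Ψip fR - entropyFlux vim vi Ψim Ψi fL := by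
  rw [entropyFlux_eq_left hECR, entropyFlux_eq_right hECL, dotProduct_sub]
  ring

end EntropyFlux

theorem tecno_entropy_conservation_general
    (d : ℕ)
    (vim vi vip : Fin d → ℝ) (Ψim Ψi Ψip : ℝ)
    (ftL ftR : Fin d → ℝ)
    (hECL : (vi - vim) ⬝ᵥ ftL = Ψi - Ψim)
    (hECR : (vip - vi) ⬝ᵥ ftR = Ψip - Ψi)
    (qtL qtR : ℝ)
    (hqtL : qtL = ((1/2 : ℝ) • (vim + vi)) ⬝ᵥ ftL - (Ψim + Ψi)/2)
    (hqtR : qtR = ((1/2 : ℝ) • (vi + vip)) ⬝ᵥ ftR - (Ψi + Ψip)/2)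
    (h : ℝ) :
    vi ⬝ᵥ (ftR - ftL) = qtR - qtL ∧
    vi ⬝ᵥ (-(1/h) • (ftR - ftL)) + (qtR - qtL)/h = 0 := by
  have tadmor : vi ⬝ᵥ (ftR - ftL) = qtR - qtL := by
    rw [hqtL, hqtR]
    exact dotProduct_sub_eq_entropyFlux_sub hECL hECR
  refine ⟨tadmor, ?_⟩
  rw [dotProduct_smul, tadmor, smul_eq_mul]
  ring

/-- Discrete entropy conservation; Tadmor's identity: if the
two-point fluxes satisfy the entropy conservation condition
`⟨v_{i+1} - v_i, f̃_{i+1/2}⟩ = Ψ_{i+1} - Ψ_i` at both interfaces of cell `i`,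
and the numerical entropy flux is
`q̃_{i+1/2} = ⟨(v_i + v_{i+1})/2, f̃_{i+1/2}⟩ - (Ψ_i + Ψ_{i+1})/2`, then the
exact identity `⟨v_i, f̃_{i+1/2} - f̃_{i-1/2}⟩ = q̃_{i+1/2} - q̃_{i-1/2}` holds;
consequently, along `du_i/dt = -(f̃_{i+1/2} - f̃_{i-1/2})/h`, the discrete
entropy equality `dη(u_i)/dt + (q̃_{i+1/2} - q̃_{i-1/2})/h = 0` holds. -/
theorem tecno_entropy_conservation
    (d : ℕ) (hd : 1 ≤ d)
    (vim vi vip : Fin d → ℝ) (Ψim Ψi Ψip : ℝ)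
    (ftL ftR : Fin d → ℝ)
    (hECL : (vi - vim) ⬝ᵥ ftL = Ψi - Ψim)
    (hECR : (vip - vi) ⬝ᵥ ftR = Ψip - Ψi)
    (qtL qtR : ℝ)
    (hqtL : qtL = ((1/2 : ℝ) • (vim + vi)) ⬝ᵥ ftL - (Ψim + Ψi)/2)
    (hqtR : qtR = ((1/2 : ℝ) • (vi + vip)) ⬝ᵥ ftR - (Ψi + Ψip)/2)
    (h : ℝ) (hh : 0 < h) :
    vi ⬝ᵥ (ftR - ftL) = qtR - qtL ∧
    vi ⬝ᵥ (-(1/h) • (ftR - ftL)) + (qtR - qtL)/h = 0 :=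
  tecno_entropy_conservation_general d vim vi vip Ψim Ψi Ψip ftL ftR hECL hECR qtL qtR hqtL hqtR h
end
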